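/- arXiv:2505.03156 — 5 statements merged into one kernel-verified Lean document; each statement's English description precedes it below -/
import Mathlib

section
/- Let P be a probability distribution on a finite set X, r : X → ℝ a reward function, and λ > 0. Define the tilted distribution P*_λ(x) = P(x)·exp(r(x)/λ) / E_P[exp(r(X)/λ)]. Then for any distribution Q on X with D_KL(Q‖P) ≤ D_KL(P*_λ‖P), we have E_Q[r] ≤ E_{P*_λ}[r]. In other words, P*_λ maximizes expected reward among all distributions with KL-divergence to P at most D_KL(P*_λ‖P). -/
/-!
With `Z = E_P[exp (r/λ)]` and `T = P*_λ` one has `log (T/P) = r/λ - log Z`, so for every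
distribution `Q`, `D(Q‖P) = D(Q‖T) + E_Q[r]/λ - log Z`; in particular
`D(T‖P) = E_T[r]/λ - log Z`. Subtracting, Gibbs' inequality `D(Q‖T) ≥ 0` turns
`D(Q‖P) ≤ D(T‖P)` into `E_Q[r] ≤ E_T[r]`.
-/

open Finset Real

/-- Expectation of `f` under weight function `P` on a finite alphabet. -/
noncomputable def expect {X : Type*} [Fintype X] (P f : X → ℝ) : ℝ := ∑ x, P x * f x

/-- Kullback–Leibler divergence `D_KL(Q‖P)` on a finite alphabet. -/
noncomputable def klDiv {X : Type*} [Fintype X] (Q P : X → ℝ) : ℝ :=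
  ∑ x, Q x * Real.log (Q x / P x)

/-- The exponentially tilted distribution `P*_λ`. -/
noncomputable def tilt {X : Type*} [Fintype X] (P r : X → ℝ) (lam : ℝ) (x : X) : ℝ :=
  P x * Real.exp (r x / lam) / ∑ y, P y * Real.exp (r y / lam)

/-- Variance of `f` under `P`. -/
noncomputable def varP {X : Type*} [Fintype X] (P f : X → ℝ) : ℝ :=
  expect P (fun x => f x ^ 2) - (expect P f) ^ 2

/-- Squared coefficient of variation of `f` under `P`. -/
noncomputable def cvSq {X : Type*} [Fintype X] (P f : X → ℝ) : ℝ :=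
  varP P f / (expect P f) ^ 2

/-- The Soft Best-of-`n` sampling distribution: draw `n` i.i.d. samples from `P`
and select one with probability proportional to `exp(r(X_i)/λ)`. -/
noncomputable def softBoN {X : Type*} [Fintype X] [DecidableEq X]
    (P r : X → ℝ) (lam : ℝ) (n : ℕ) (x : X) : ℝ :=
  ∑ s : Fin n → X, (∏ j, P (s j)) *
    ((∑ i : Fin n, if s i = x then Real.exp (r (s i) / lam) else 0) /
      ∑ j, Real.exp (r (s j) / lam))

section KullbackLeibler

variable {X : Type*} [Fintype X]

theorem sub_le_mul_log_div {q p : ℝ} (hq : 0 ≤ q) (hp : 0 < p) : q - p ≤ q * log (q / p) := by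
  rcases hq.eq_or_lt with rfl | hq
  · simpa using hp.le
  · have h := one_sub_inv_le_log_of_pos (div_pos hq hp)
    rw [inv_div] at h
    calc q - p = q * (1 - p / q) := by field_simp
      _ ≤ q * log (q / p) := mul_le_mul_of_nonneg_left h hq.le

theorem klDiv_nonneg {Q R : X → ℝ} (hQ : ∀ x, 0 ≤ Q x) (hR : ∀ x, 0 < R x)
    (hsum : ∑ x, R x ≤ ∑ x, Q x) : 0 ≤ klDiv Q R :=
  calc 0 ≤ ∑ x, (Q x - R x) := by rw [sum_sub_distrib]; linarith
    _ ≤ klDiv Q R := sum_le_sum fun x _ ↦ sub_le_mul_log_div (hQ x) (hR x)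

theorem klDiv_self (Q : X → ℝ) : klDiv Q Q = 0 := by
  simp [klDiv]

theorem klDiv_eq_klDiv_add_sum_mul_log_div {Q R P : X → ℝ} (hR : ∀ x, 0 < R x)
    (hP : ∀ x, 0 < P x) : klDiv Q P = klDiv Q R + ∑ x, Q x * log (R x / P x) := by
  rw [klDiv, klDiv, ← sum_add_distrib]
  refine sum_congr rfl fun x _ ↦ ?_
  rcases eq_or_ne (Q x) 0 with hQx | hQx
  · simp [hQx]
  · rw [← mul_add, ← log_mul (div_ne_zero hQx (hR x).ne') (div_ne_zero (hR x).ne' (hP x).ne'),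
      div_mul_div_cancel₀ (hR x).ne']

end KullbackLeibler

section Tilt

variable {X : Type*} [Fintype X] [Nonempty X] {P : X → ℝ} (r : X → ℝ) (lam : ℝ)

theorem sum_mul_exp_pos (hP : ∀ x, 0 < P x) : 0 < ∑ y, P y * exp (r y / lam) :=
  sum_pos (fun y _ ↦ mul_pos (hP y) (exp_pos _)) univ_nonempty

theorem tilt_pos (hP : ∀ x, 0 < P x) (x : X) : 0 < tilt P r lam x :=
  div_pos (mul_pos (hP x) (exp_pos _)) (sum_mul_exp_pos r lam hP)

theorem sum_tilt (hP : ∀ x, 0 < P x) : ∑ x, tilt P r lam x = 1 := by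
  simp only [tilt, ← sum_div]
  exact div_self (sum_mul_exp_pos r lam hP).ne'

theorem log_tilt_div (hP : ∀ x, 0 < P x) (x : X) :
    log (tilt P r lam x / P x) = r x / lam - log (∑ y, P y * exp (r y / lam)) := by
  have hZ := (sum_mul_exp_pos r lam hP).ne'
  have h : tilt P r lam x / P x = exp (r x / lam) / ∑ y, P y * exp (r y / lam) := by
    rw [tilt]
    field_simp [(hP x).ne']
  rw [h, log_div (exp_pos _).ne' hZ, log_exp]

theorem klDiv_eq_klDiv_tilt_add (hP : ∀ x, 0 < P x) {Q : X → ℝ} (hQ : ∑ x, Q x = 1) :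
    klDiv Q P =
      klDiv Q (tilt P r lam) + (expect Q r / lam - log (∑ y, P y * exp (r y / lam))) := by
  rw [klDiv_eq_klDiv_add_sum_mul_log_div (tilt_pos r lam hP) hP]
  simp only [log_tilt_div r lam hP, mul_sub, sum_sub_distrib, ← sum_mul, hQ, one_mul,
    _root_.expect, sum_div, mul_div_assoc]

end Tilt

theorem tilt_maximizes_reward_general {X : Type*} [Fintype X]
    (P r : X → ℝ) (lam : ℝ) (hlam : 0 < lam)
    (hPpos : ∀ x, 0 < P x)
    (Q : X → ℝ) (hQ : ∀ x, 0 ≤ Q x) (hQsum : ∑ x, Q x = 1)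
    (hKL : klDiv Q P ≤ klDiv (tilt P r lam) P) :
    expect Q r ≤ expect (tilt P r lam) r := by
  have : Nonempty X := univ_nonempty_iff.mp (nonempty_of_sum_ne_zero (hQsum ▸ one_ne_zero))
  have hQT := klDiv_nonneg hQ (tilt_pos r lam hPpos) (by rw [sum_tilt r lam hPpos, hQsum])
  have hQP := klDiv_eq_klDiv_tilt_add r lam hPpos hQsum
  have hTP := klDiv_eq_klDiv_tilt_add r lam hPpos (sum_tilt r lam hPpos)
  rw [klDiv_self, zero_add] at hTP
  have : expect Q r / lam ≤ expect (tilt P r lam) r / lam := by linarith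
  exact (div_le_div_iff_of_pos_right hlam).1 this

/-- the tilted distribution `P*_λ` maximizes expected reward among all
distributions whose KL divergence to `P` is at most `D_KL(P*_λ‖P)`. -/
theorem tilt_maximizes_reward {X : Type*} [Fintype X]
    (P r : X → ℝ) (lam : ℝ) (hlam : 0 < lam)
    (hPpos : ∀ x, 0 < P x) (hPsum : ∑ x, P x = 1)
    (Q : X → ℝ) (hQ : ∀ x, 0 ≤ Q x) (hQsum : ∑ x, Q x = 1)
    (hKL : klDiv Q P ≤ klDiv (tilt P r lam) P) :
    expect Q r ≤ expect (tilt P r lam) r :=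
  tilt_maximizes_reward_general P r lam hlam hPpos Q hQ hQsum hKL
end

section
/- With P_{n,λ} the Soft Best-of-n distribution, for every x ∈ X we have the lower bound P_{n,λ}(x) ≥ P(x)·exp(r(x)/λ) / ( (1/n)·exp(r(x)/λ) + ((n−1)/n)·E_P[exp(r(X)/λ)] ). -/
open Finset Real

/-- lower bound on the Soft Best-of-`n` distribution:
`P_{n,λ}(x) ≥ P(x)·exp(r(x)/λ) / ((1/n)·exp(r(x)/λ) + ((n−1)/n)·E_P[exp(r(X)/λ)])`. -/
theorem softBoN_lower_bound {X : Type*} [Fintype X] [DecidableEq X]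
    (P r : X → ℝ) (lam : ℝ) (hlam : 0 < lam) (n : ℕ) (hn : 1 ≤ n)
    (hP : ∀ x, 0 ≤ P x) (hPsum : ∑ x, P x = 1) (x : X) :
    softBoN P r lam n x ≥
      P x * Real.exp (r x / lam) /
        ((1 / (n : ℝ)) * Real.exp (r x / lam) +
          (((n : ℝ) - 1) / (n : ℝ)) * expect P (fun y => Real.exp (r y / lam))) := by
  classical
  have hnR : (0:ℝ) < (n:ℝ) := by exact_mod_cast Nat.lt_of_lt_of_le Nat.zero_lt_one hn
  haveI : NeZero n := ⟨by omega⟩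
  set e : X → ℝ := fun y => Real.exp (r y / lam) with he
  have hepos : ∀ y, 0 < e y := fun y => Real.exp_pos _
  set w : (Fin n → X) → ℝ := fun s => ∏ j, P (s j) with hw
  set T : (Fin n → X) → ℝ := fun s => ∑ j, e (s j) with hT
  set χ : X → ℝ := fun y => if y = x then 1 else 0 with hχ
  set N : (Fin n → X) → ℝ := fun s => ∑ i, χ (s i) with hN
  set Ev : ℝ := ∑ y, P y * e y with hEv
  have hwpos : ∀ s, 0 ≤ w s := fun s => Finset.prod_nonneg fun j _ => hP _
  have hTpos : ∀ s, 0 < T s := fun s => Finset.sum_pos (fun j _ => hepos _) univ_nonempty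
  have hNpos : ∀ s, 0 ≤ N s := fun s => Finset.sum_nonneg fun i _ => by
    simp only [hχ]; split <;> norm_num
  have hEvpos : 0 ≤ Ev := Finset.sum_nonneg fun y _ => mul_nonneg (hP y) (hepos y).le
  have hexE : expect P (fun y => Real.exp (r y / lam)) = Ev := rfl
  -- rewrite softBoN
  have hsoft : softBoN P r lam n x = ∑ s : Fin n → X, w s * N s * e x / T s := by
    unfold softBoN
    refine Finset.sum_congr rfl fun s _ => ?_
    have hnum : (∑ i : Fin n, if s i = x then Real.exp (r (s i) / lam) else 0) = N s * e x := by
      rw [hN]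
      rw [Finset.sum_mul]
      refine Finset.sum_congr rfl fun i _ => ?_
      by_cases h : s i = x <;> simp [hχ, h, he]
    rw [hnum]; ring
  -- first moment
  have hA : ∀ i : Fin n, ∑ s : Fin n → X, w s * χ (s i) = P x := by
    intro i
    set F : Fin n → X → ℝ := fun j y => P y * (if j = i then χ y else 1) with hF
    have h1 : ∀ s : Fin n → X, w s * χ (s i) = ∏ j, F j (s j) := by
      intro s
      simp only [hF, hw, Finset.prod_mul_distrib, Fintype.prod_ite_eq']
    rw [Finset.sum_congr rfl fun s _ => h1 s, ← Fintype.prod_sum F]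
    simp only [hF]
    have h2 : ∀ j : Fin n, (∑ y, P y * (if j = i then χ y else 1)) =
        if j = i then P x else 1 := by
      intro j
      by_cases h : j = i <;> simp [h, hχ, mul_ite, Finset.sum_ite_eq', hPsum]
    rw [Finset.prod_congr rfl fun j _ => h2 j, Fintype.prod_ite_eq']
  -- second moments
  have hB1 : ∀ i : Fin n, ∑ s : Fin n → X, w s * χ (s i) * e (s i) = P x * e x := by
    intro i
    set F : Fin n → X → ℝ := fun j y => P y * (if j = i then χ y * e y else 1) with hF
    have h1 : ∀ s : Fin n → X, w s * χ (s i) * e (s i) = ∏ j, F j (s j) := by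
      intro s
      simp only [hF, hw, Finset.prod_mul_distrib, Fintype.prod_ite_eq']
      try ring
    rw [Finset.sum_congr rfl fun s _ => h1 s, ← Fintype.prod_sum F]
    simp only [hF]
    have h2 : ∀ j : Fin n, (∑ y, P y * (if j = i then χ y * e y else 1)) =
        if j = i then P x * e x else 1 := by
      intro j
      rcases eq_or_ne j i with h | h
      · simp [h, hχ, mul_ite, ite_mul, mul_zero, zero_mul, mul_one, one_mul,
          Finset.sum_ite_eq']
      · simp [h, hPsum]
    rw [Finset.prod_congr rfl fun j _ => h2 j, Fintype.prod_ite_eq']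
  have hB2 : ∀ i j : Fin n, i ≠ j →
      ∑ s : Fin n → X, w s * χ (s i) * e (s j) = P x * Ev := by
    intro i j hij
    set F : Fin n → X → ℝ := fun k y => P y * (if k = i then χ y else 1) * (if k = j then e y else 1) with hF
    have h1 : ∀ s : Fin n → X, w s * χ (s i) * e (s j) = ∏ k, F k (s k) := by
      intro s
      simp only [hF, hw, Finset.prod_mul_distrib, Fintype.prod_ite_eq']
      try ring
    rw [Finset.sum_congr rfl fun s _ => h1 s, ← Fintype.prod_sum F]
    simp only [hF]
    have h2 : ∀ k : Fin n, (∑ y, P y * (if k = i then χ y else 1) * (if k = j then e y else 1)) =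
        (if k = i then P x else 1) * (if k = j then Ev else 1) := by
      intro k
      rcases eq_or_ne k i with h | h
      · have h' : k ≠ j := by rw [h]; exact hij
        simp [h, h', hij, hχ, mul_ite, ite_mul, mul_zero, zero_mul, mul_one, one_mul,
          Finset.sum_ite_eq']
      · rcases eq_or_ne k j with h' | h'
        · simp [h, h', hij.symm, hEv]
        · simp [h, h', hPsum]
    rw [Finset.prod_congr rfl fun k _ => h2 k, Finset.prod_mul_distrib,
      Fintype.prod_ite_eq', Fintype.prod_ite_eq']
  -- assemble first moment of N
  have hA' : ∑ s : Fin n → X, w s * N s = (n : ℝ) * P x := by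
    calc ∑ s : Fin n → X, w s * N s
        = ∑ s : Fin n → X, ∑ i : Fin n, w s * χ (s i) :=
          Finset.sum_congr rfl fun s _ => by rw [hN]; exact Finset.mul_sum _ _ _
      _ = ∑ i : Fin n, ∑ s : Fin n → X, w s * χ (s i) := Finset.sum_comm
      _ = ∑ _i : Fin n, P x := Finset.sum_congr rfl fun i _ => hA i
      _ = (n : ℝ) * P x := by simp [mul_comm]
  -- assemble mixed moment
  have hB' : ∑ s : Fin n → X, w s * N s * T s
      = (n : ℝ) * (P x * e x + ((n:ℝ) - 1) * (P x * Ev)) := by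
    have hst : ∀ s : Fin n → X, w s * N s * T s
        = ∑ i : Fin n, ∑ j : Fin n, w s * χ (s i) * e (s j) := by
      intro s
      have hNT : N s * T s = ∑ i : Fin n, ∑ j : Fin n, χ (s i) * e (s j) := by
        simp only [hN, hT]
        rw [Finset.sum_mul_sum]
      rw [mul_assoc, hNT, Finset.mul_sum]
      refine Finset.sum_congr rfl fun i _ => ?_
      rw [Finset.mul_sum]
      exact Finset.sum_congr rfl fun j _ => by ring
    have hinner : ∀ i : Fin n, (∑ j : Fin n, ∑ s : Fin n → X, w s * χ (s i) * e (s j))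
        = P x * e x + ((n:ℝ) - 1) * (P x * Ev) := by
      intro i
      have h3 : ∀ j : Fin n, (∑ s : Fin n → X, w s * χ (s i) * e (s j))
          = if j = i then P x * e x else P x * Ev := by
        intro j
        by_cases h : j = i
        · rw [h, if_pos rfl]; exact hB1 i
        · rw [if_neg h]; exact hB2 i j (fun hh => h hh.symm)
      rw [Finset.sum_congr rfl fun j _ => h3 j,
        ← Finset.add_sum_erase _ _ (Finset.mem_univ i), if_pos rfl]
      congr 1
      rw [Finset.sum_congr rfl fun j hj => if_neg (Finset.ne_of_mem_erase hj),
        Finset.sum_const, Finset.card_erase_of_mem (Finset.mem_univ i), Finset.card_univ,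
        Fintype.card_fin, nsmul_eq_mul, Nat.cast_sub hn, Nat.cast_one]
    calc ∑ s : Fin n → X, w s * N s * T s
        = ∑ s : Fin n → X, ∑ i : Fin n, ∑ j : Fin n, w s * χ (s i) * e (s j) :=
          Finset.sum_congr rfl fun s _ => hst s
      _ = ∑ i : Fin n, ∑ s : Fin n → X, ∑ j : Fin n, w s * χ (s i) * e (s j) :=
          Finset.sum_comm
      _ = ∑ i : Fin n, ∑ j : Fin n, ∑ s : Fin n → X, w s * χ (s i) * e (s j) :=
          Finset.sum_congr rfl fun i _ => Finset.sum_comm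
      _ = ∑ _i : Fin n, (P x * e x + ((n:ℝ) - 1) * (P x * Ev)) :=
          Finset.sum_congr rfl fun i _ => hinner i
      _ = (n : ℝ) * (P x * e x + ((n:ℝ) - 1) * (P x * Ev)) := by
          rw [Finset.sum_const, Finset.card_univ, Fintype.card_fin, nsmul_eq_mul]
  rw [hsoft, hexE, ge_iff_le]
  by_cases hx : P x = 0
  · rw [hx]
    rw [zero_mul, zero_div]
    exact Finset.sum_nonneg fun s _ => div_nonneg
      (mul_nonneg (mul_nonneg (hwpos s) (hNpos s)) (hepos x).le) (hTpos s).le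
  · have hxpos : 0 < P x := lt_of_le_of_ne (hP x) (Ne.symm hx)
    set D : ℝ := 1 / (n:ℝ) * e x + ((n:ℝ) - 1) / (n:ℝ) * Ev with hD
    have hDpos : 0 < D := by
      rw [hD]
      have h1 : 0 < 1 / (n:ℝ) * e x := by positivity
      have h2 : 0 ≤ ((n:ℝ) - 1) / (n:ℝ) * Ev := by
        apply mul_nonneg _ hEvpos
        apply div_nonneg _ hnR.le
        have : (1:ℝ) ≤ (n:ℝ) := by exact_mod_cast hn
        linarith
      linarith
    have hBD : ∑ s : Fin n → X, w s * N s * T s = (n:ℝ)^2 * P x * D := by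
      rw [hB', hD]
      field_simp
    set C : ℝ := ∑ s : Fin n → X, w s * N s / T s with hC
    -- Cauchy-Schwarz
    have hCS : ((n:ℝ) * P x)^2 ≤ C * ((n:ℝ)^2 * P x * D) := by
      rw [← hA', ← hBD, hC]
      have := Finset.sum_mul_sq_le_sq_mul_sq Finset.univ
        (fun s : Fin n → X => Real.sqrt (w s * N s / T s))
        (fun s : Fin n → X => Real.sqrt (w s * N s * T s))
      calc (∑ s : Fin n → X, w s * N s)^2
          = (∑ s : Fin n → X, Real.sqrt (w s * N s / T s) * Real.sqrt (w s * N s * T s))^2 := by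
            congr 1
            refine Finset.sum_congr rfl fun s _ => ?_
            rw [← Real.sqrt_mul (div_nonneg (mul_nonneg (hwpos s) (hNpos s)) (hTpos s).le)]
            have hTs := (hTpos s).ne'
            have : w s * N s / T s * (w s * N s * T s) = (w s * N s)^2 := by
              field_simp
            rw [this, Real.sqrt_sq (mul_nonneg (hwpos s) (hNpos s))]
        _ ≤ (∑ s : Fin n → X, Real.sqrt (w s * N s / T s)^2)
              * ∑ s : Fin n → X, Real.sqrt (w s * N s * T s)^2 := this
        _ = (∑ s : Fin n → X, w s * N s / T s) * ∑ s : Fin n → X, w s * N s * T s := by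
            congr 1
            · exact Finset.sum_congr rfl fun s _ => Real.sq_sqrt
                (div_nonneg (mul_nonneg (hwpos s) (hNpos s)) (hTpos s).le)
            · exact Finset.sum_congr rfl fun s _ => Real.sq_sqrt
                (mul_nonneg (mul_nonneg (hwpos s) (hNpos s)) (hTpos s).le)
    have hClow : P x / D ≤ C := by
      rw [div_le_iff₀ hDpos]
      have hkey : (n:ℝ)^2 * P x * (P x) ≤ (n:ℝ)^2 * P x * (C * D) := by
        calc (n:ℝ)^2 * P x * (P x) = ((n:ℝ) * P x)^2 := by ring
          _ ≤ C * ((n:ℝ)^2 * P x * D) := hCS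
          _ = (n:ℝ)^2 * P x * (C * D) := by ring
      exact le_of_mul_le_mul_left hkey (by positivity)
    calc P x * e x / D = e x * (P x / D) := by ring
      _ ≤ e x * C := by
          exact mul_le_mul_of_nonneg_left hClow (hepos x).le
      _ = ∑ s : Fin n → X, w s * N s * e x / T s := by
          rw [hC, Finset.mul_sum]
          exact Finset.sum_congr rfl fun s _ => by ring
end

section
/- For any λ > 0 and integer n ≥ 1, the KL divergence from the tilted distribution P*_λ to the Soft Best-of-n distribution P_{n,λ} satisfies D_KL(P*_λ ‖ P_{n,λ}) ≤ log(1 + (1/n)·CV(exp(r(X)/λ))²), where CV(Y)² = Var(Y)/E[Y]² is the squared coefficient of variation under P. In particular, D_KL(P*_λ ‖ P_{n,λ}) = O(1/n). -/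
open Finset Real

section Aux
variable {X : Type*} [Fintype X] [DecidableEq X]

private lemma sum_pi_prod {n : ℕ} (g : Fin n → X → ℝ) :
    ∑ s : Fin n → X, ∏ j, g j (s j) = ∏ j, ∑ y, g j y := by
  have := Finset.sum_prod_piFinset (ι := Fin n) Finset.univ g
  rwa [Fintype.piFinset_univ] at this

private lemma marg1 {n : ℕ} (P : X → ℝ) (hPsum : ∑ x, P x = 1) (i : Fin n) (x : X)
    (h : X → ℝ) :
    ∑ s : Fin n → X, (∏ j, P (s j)) * (if s i = x then h (s i) else 0) = P x * h x := by
  have key : ∀ s : Fin n → X, (∏ j, P (s j)) * (if s i = x then h (s i) else 0)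
      = ∏ j, (P (s j) * (if j = i then (if s j = x then h (s j) else 0) else 1)) := by
    intro s
    rw [Finset.prod_mul_distrib, Finset.prod_ite_eq']
    simp
  rw [Finset.sum_congr rfl (fun s _ => key s),
    sum_pi_prod (fun j y => P y * (if j = i then (if y = x then h y else 0) else 1))]
  have h2 : ∀ j : Fin n, (∑ y, P y * (if j = i then (if y = x then h y else 0) else 1))
      = if j = i then P x * h x else 1 := by
    intro j
    by_cases hj : j = i <;>
      simp [hj, hPsum, mul_ite, mul_zero, Finset.sum_ite_eq', mul_assoc]
  simp_rw [h2, Finset.prod_ite_eq']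
  simp

private lemma marg2 {n : ℕ} (P : X → ℝ) (hPsum : ∑ x, P x = 1) {i k : Fin n} (hik : k ≠ i)
    (x : X) (h : X → ℝ) :
    ∑ s : Fin n → X, (∏ j, P (s j)) * (if s i = x then h (s k) else 0)
      = P x * ∑ y, P y * h y := by
  have key : ∀ s : Fin n → X, (∏ j, P (s j)) * (if s i = x then h (s k) else 0)
      = ∏ j, (P (s j) * ((if j = i then (if s j = x then 1 else 0) else 1)
          * (if j = k then h (s j) else 1))) := by
    intro s
    rw [Finset.prod_mul_distrib, Finset.prod_mul_distrib, Finset.prod_ite_eq',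
      Finset.prod_ite_eq']
    simp [ite_mul]
  rw [Finset.sum_congr rfl (fun s _ => key s),
    sum_pi_prod (fun j y => P y * ((if j = i then (if y = x then 1 else 0) else 1)
      * (if j = k then h y else 1)))]
  have h2 : ∀ j : Fin n, (∑ y, P y * ((if j = i then (if y = x then 1 else 0) else 1)
      * (if j = k then h y else 1)))
      = (if j = i then P x else 1) * (if j = k then (∑ y, P y * h y) else 1) := by
    intro j
    by_cases hj : j = i
    · have hjk : ¬ (j = k) := by rw [hj]; exact fun hh => hik hh.symm
      simp [hj, hjk, Ne.symm hik, mul_ite, mul_zero, mul_one, Finset.sum_ite_eq']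
    · by_cases hk : j = k
      · simp [hj, hk, hik]
      · simp [hj, hk, hPsum]
  simp_rw [h2]
  rw [Finset.prod_mul_distrib, Finset.prod_ite_eq', Finset.prod_ite_eq']
  simp

end Aux

section Aux2
variable {X : Type*} [Fintype X] [DecidableEq X]

private lemma softBoN_ge {n : ℕ} (hn : 1 ≤ n) (P w : X → ℝ) (hPpos : ∀ y, 0 < P y)
    (hPsum : ∑ x, P x = 1) (hwpos : ∀ y, 0 < w y) (x : X) :
    (n : ℝ) * (P x * w x / (w x + ((n : ℝ) - 1) * ∑ y, P y * w y))
      ≤ ∑ s : Fin n → X, (∏ j, P (s j)) *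
          ((∑ i, if s i = x then w (s i) else 0) / ∑ j, w (s j)) := by
  have hi0 : Nonempty (Fin n) := ⟨⟨0, hn⟩⟩
  have hXne : Nonempty X := ⟨x⟩
  set Z : ℝ := ∑ y, P y * w y with hZ
  have hZpos : 0 < Z := Finset.sum_pos (fun y _ => mul_pos (hPpos y) (hwpos y))
    Finset.univ_nonempty
  set D : (Fin n → X) → ℝ := fun s => ∑ j, w (s j) with hD
  have hDpos : ∀ s : Fin n → X, 0 < D s :=
    fun s => Finset.sum_pos (fun j _ => hwpos (s j)) Finset.univ_nonempty
  set M : ℝ := w x + ((n : ℝ) - 1) * Z with hM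
  have hn1 : (1 : ℝ) ≤ (n : ℝ) := by exact_mod_cast hn
  have hMpos : 0 < M := by
    have : 0 ≤ ((n : ℝ) - 1) * Z := mul_nonneg (by linarith) hZpos.le
    have := hwpos x; rw [hM]; linarith
  have hppos : ∀ s : Fin n → X, 0 < ∏ j, P (s j) :=
    fun s => Finset.prod_pos fun j _ => hPpos (s j)
  have step : ∀ s : Fin n → X, (∏ j, P (s j)) *
      ((∑ i, if s i = x then w (s i) else 0) / D s)
      = ∑ i, (∏ j, P (s j)) * (if s i = x then w x / D s else 0) := by
    intro s
    have e1 : (∑ i, if s i = x then w (s i) else 0)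
        = ∑ i : Fin n, if s i = x then w x else 0 := by
      refine Finset.sum_congr rfl fun i _ => ?_
      split_ifs with h
      · rw [h]
      · rfl
    rw [e1, Finset.sum_div, Finset.mul_sum]
    refine Finset.sum_congr rfl fun i _ => ?_
    split_ifs with h <;> simp
  rw [Finset.sum_congr rfl (fun s _ => step s), Finset.sum_comm]
  have per : ∀ i : Fin n, P x * w x / M
      ≤ ∑ s : Fin n → X, (∏ j, P (s j)) * (if s i = x then w x / D s else 0) := by
    intro i
    set A : Finset (Fin n → X) := Finset.univ.filter (fun s => s i = x) with hA
    have e2 : ∑ s : Fin n → X, (∏ j, P (s j)) * (if s i = x then w x / D s else 0)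
        = w x * ∑ s ∈ A, (∏ j, P (s j)) / D s := by
      rw [Finset.mul_sum, hA, Finset.sum_filter]
      refine Finset.sum_congr rfl fun s _ => ?_
      split_ifs with h
      · ring
      · simp
    have hA1 : ∑ s ∈ A, (∏ j, P (s j)) = P x := by
      rw [hA, Finset.sum_filter]
      have := marg1 P hPsum i x (fun _ => (1 : ℝ))
      simpa [mul_ite] using this
    have hAk : ∀ k : Fin n, (∑ s : Fin n → X, (∏ j, P (s j)) *
        (if s i = x then w (s k) else 0)) = if k = i then P x * w x else P x * Z := by
      intro k
      by_cases hk : k = i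
      · subst hk; simp only [if_pos rfl]; exact marg1 P hPsum k x w
      · rw [if_neg hk]; exact marg2 P hPsum hk x w
    have hA2 : ∑ s ∈ A, (∏ j, P (s j)) * D s = P x * M := by
      have e3a : ∀ s : Fin n → X, (if s i = x then (∏ j, P (s j)) * D s else 0)
          = ∑ k : Fin n, (∏ j, P (s j)) * (if s i = x then w (s k) else 0) := by
        intro s
        split_ifs with h
        · simp only [hD, Finset.mul_sum]
        · simp
      rw [hA, Finset.sum_filter, Finset.sum_congr rfl (fun s _ => e3a s),
        Finset.sum_comm, Finset.sum_congr rfl (fun k _ => hAk k)]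
      have e4 : ∑ k : Fin n, (if k = i then P x * w x else P x * Z)
          = ∑ k : Fin n, (P x * Z + if k = i then P x * w x - P x * Z else 0) := by
        refine Finset.sum_congr rfl fun k _ => ?_
        split_ifs <;> ring
      rw [e4, Finset.sum_add_distrib, Finset.sum_const, Finset.sum_ite_eq' Finset.univ i]
      simp only [Finset.card_univ, Fintype.card_fin, Finset.mem_univ, if_pos,
        nsmul_eq_mul, hM]
      ring
    have sed := Finset.sq_sum_div_le_sum_sq_div A (fun s => ∏ j, P (s j))
      (g := fun s => (∏ j, P (s j)) * D s)
      (fun s _ => mul_pos (hppos s) (hDpos s))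
    have e5 : ∑ s ∈ A, ((∏ j, P (s j)) ^ 2 / ((∏ j, P (s j)) * D s))
        = ∑ s ∈ A, (∏ j, P (s j)) / D s := by
      refine Finset.sum_congr rfl fun s _ => ?_
      rw [pow_two, mul_div_mul_left _ _ (hppos s).ne']
    rw [hA1, hA2, e5] at sed
    have e6 : (P x) ^ 2 / (P x * M) = P x / M := by
      rw [pow_two, mul_div_mul_left _ _ (hPpos x).ne']
    rw [e6] at sed
    calc P x * w x / M = w x * (P x / M) := by ring
    _ ≤ w x * ∑ s ∈ A, (∏ j, P (s j)) / D s :=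
        mul_le_mul_of_nonneg_left sed (hwpos x).le
    _ = _ := e2.symm
  calc (n : ℝ) * (P x * w x / M) = ∑ _i : Fin n, (P x * w x / M) := by
        simp [Finset.sum_const, Finset.card_univ, nsmul_eq_mul]
  _ ≤ _ := Finset.sum_le_sum fun i _ => per i

end Aux2

/-- `D_KL(P*_λ ‖ P_{n,λ}) ≤ log(1 + (1/n)·CV(exp(r(X)/λ))²)`; in
particular the KL divergence is `O(1/n)`. -/
theorem klDiv_tilt_softBoN_le {X : Type*} [Fintype X] [DecidableEq X]
    (P r : X → ℝ) (lam : ℝ) (hlam : 0 < lam)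
    (hPpos : ∀ x, 0 < P x) (hPsum : ∑ x, P x = 1) :
    (∀ n : ℕ, 1 ≤ n →
      klDiv (tilt P r lam) (softBoN P r lam n) ≤
        Real.log (1 + (1 / (n : ℝ)) * cvSq P (fun x => Real.exp (r x / lam)))) ∧
    ∃ C : ℝ, 0 ≤ C ∧ ∀ n : ℕ, 1 ≤ n →
      klDiv (tilt P r lam) (softBoN P r lam n) ≤ C / (n : ℝ) := by
  have hXne : Nonempty X := by
    rcases isEmpty_or_nonempty X with h | h
    · exfalso; rw [Finset.univ_eq_empty, Finset.sum_empty] at hPsum; norm_num at hPsum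
    · exact h
  set w : X → ℝ := fun y => Real.exp (r y / lam) with hw
  have hwpos : ∀ y, 0 < w y := fun y => Real.exp_pos _
  set Z : ℝ := ∑ y, P y * w y with hZdef
  have hZpos : 0 < Z :=
    Finset.sum_pos (fun y _ => mul_pos (hPpos y) (hwpos y)) Finset.univ_nonempty
  set E2 : ℝ := ∑ y, P y * (w y) ^ 2 with hE2
  have hcv : cvSq P w = (E2 - Z ^ 2) / Z ^ 2 := rfl
  have hvar : varP P w = ∑ y, P y * (w y - Z) ^ 2 := by
    have e : ∀ y : X, P y * (w y - Z) ^ 2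
        = P y * w y ^ 2 - 2 * Z * (P y * w y) + Z ^ 2 * P y := fun y => by ring
    rw [Finset.sum_congr rfl (fun y _ => e y)]
    rw [Finset.sum_add_distrib, Finset.sum_sub_distrib, ← Finset.mul_sum, ← Finset.mul_sum,
      hPsum, ← hZdef]
    simp only [varP, _root_.expect]
    rw [← hE2, ← hZdef]
    ring
  have hcvnonneg : 0 ≤ cvSq P w := by
    have h0 : 0 ≤ varP P w := by
      rw [hvar]
      exact Finset.sum_nonneg fun y _ => mul_nonneg (hPpos y).le (sq_nonneg _)
    exact div_nonneg h0 (sq_nonneg _)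
  have key : ∀ n : ℕ, 1 ≤ n → klDiv (tilt P r lam) (softBoN P r lam n)
      ≤ Real.log (1 + (1 / (n : ℝ)) * cvSq P w) := by
    intro n hn
    have hnR : (1 : ℝ) ≤ (n : ℝ) := by exact_mod_cast hn
    have hn0 : (0 : ℝ) < (n : ℝ) := by linarith
    have hQ_eq : ∀ x, tilt P r lam x = P x * w x / Z := fun x => rfl
    have hQpos : ∀ x, 0 < tilt P r lam x := by
      intro x; rw [hQ_eq]; exact div_pos (mul_pos (hPpos x) (hwpos x)) hZpos
    have hQsum : ∑ x, tilt P r lam x = 1 := by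
      rw [Finset.sum_congr rfl (fun x _ => hQ_eq x), ← Finset.sum_div, ← hZdef,
        div_self hZpos.ne']
    set M : X → ℝ := fun x => w x + ((n : ℝ) - 1) * Z with hMdef
    have hMpos : ∀ x, 0 < M x := by
      intro x
      have h1 : 0 ≤ ((n : ℝ) - 1) * Z := mul_nonneg (by linarith) hZpos.le
      have h2 := hwpos x
      simp only [hMdef]; linarith
    have hLpos : ∀ x, 0 < (n : ℝ) * (P x * w x / M x) :=
      fun x => mul_pos hn0 (div_pos (mul_pos (hPpos x) (hwpos x)) (hMpos x))
    have hsoft : ∀ x, softBoN P r lam n x = ∑ s : Fin n → X, (∏ j, P (s j)) *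
        ((∑ i : Fin n, if s i = x then w (s i) else 0) / ∑ j, w (s j)) := fun x => rfl
    have hBge : ∀ x, (n : ℝ) * (P x * w x / M x) ≤ softBoN P r lam n x := by
      intro x
      rw [hsoft x]
      exact softBoN_ge hn P w hPpos hPsum hwpos x
    have hBpos : ∀ x, 0 < softBoN P r lam n x :=
      fun x => lt_of_lt_of_le (hLpos x) (hBge x)
    set a : X → ℝ := fun x => M x / ((n : ℝ) * Z) with ha
    have hapos : ∀ x, 0 < a x := fun x => div_pos (hMpos x) (mul_pos hn0 hZpos)
    have hQL : ∀ x, tilt P r lam x / ((n : ℝ) * (P x * w x / M x)) = a x := by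
      intro x
      have h1 : P x ≠ 0 := (hPpos x).ne'
      have h2 : w x ≠ 0 := (hwpos x).ne'
      have h3 : Z ≠ 0 := hZpos.ne'
      have h4 : M x ≠ 0 := (hMpos x).ne'
      have h5 : (n : ℝ) ≠ 0 := hn0.ne'
      rw [hQ_eq]
      simp only [ha, hMdef]
      field_simp
    have step1 : klDiv (tilt P r lam) (softBoN P r lam n)
        ≤ ∑ x, tilt P r lam x * Real.log (a x) := by
      unfold klDiv
      refine Finset.sum_le_sum fun x _ => ?_
      refine mul_le_mul_of_nonneg_left ?_ (hQpos x).le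
      rw [← hQL x]
      refine Real.log_le_log (div_pos (hQpos x) (hBpos x)) ?_
      exact div_le_div_of_nonneg_left (hQpos x).le (hLpos x) (hBge x)
    have step2 : ∑ x, tilt P r lam x * Real.log (a x)
        ≤ Real.log (∑ x, tilt P r lam x * a x) := by
      have hconc := strictConcaveOn_log_Ioi.concaveOn
      have := hconc.le_map_sum (t := Finset.univ) (w := fun x => tilt P r lam x) (p := a)
        (fun x _ => (hQpos x).le) hQsum (fun x _ => Set.mem_Ioi.2 (hapos x))
      simpa [smul_eq_mul] using this
    have hsum_a : ∑ x, tilt P r lam x * a x = 1 + (1 / (n : ℝ)) * cvSq P w := by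
      have e : ∀ x, tilt P r lam x * a x = (P x * (w x) ^ 2) * (1 / ((n : ℝ) * Z ^ 2))
          + (P x * w x) * (((n : ℝ) - 1) / ((n : ℝ) * Z)) := by
        intro x
        have h1 : P x ≠ 0 := (hPpos x).ne'
        have h2 : w x ≠ 0 := (hwpos x).ne'
        have h3 : Z ≠ 0 := hZpos.ne'
        have h4 : M x ≠ 0 := (hMpos x).ne'
        have h5 : (n : ℝ) ≠ 0 := hn0.ne'
        rw [hQ_eq]
        simp only [ha, hMdef]
        field_simp
      rw [Finset.sum_congr rfl (fun x _ => e x), Finset.sum_add_distrib,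
        ← Finset.sum_mul, ← Finset.sum_mul, ← hE2, ← hZdef, hcv]
      field_simp
      ring
    calc klDiv (tilt P r lam) (softBoN P r lam n)
        ≤ ∑ x, tilt P r lam x * Real.log (a x) := step1
      _ ≤ Real.log (∑ x, tilt P r lam x * a x) := step2
      _ = Real.log (1 + (1 / (n : ℝ)) * cvSq P w) := by rw [hsum_a]
  refine ⟨key, cvSq P w, hcvnonneg, fun n hn => ?_⟩
  have hnR : (1 : ℝ) ≤ (n : ℝ) := by exact_mod_cast hn
  have h0 : 0 ≤ (1 / (n : ℝ)) * cvSq P w :=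
    mul_nonneg (by positivity) hcvnonneg
  calc klDiv (tilt P r lam) (softBoN P r lam n)
      ≤ Real.log (1 + (1 / (n : ℝ)) * cvSq P w) := key n hn
    _ ≤ (1 + (1 / (n : ℝ)) * cvSq P w) - 1 := Real.log_le_sub_one_of_pos (by linarith)
    _ = cvSq P w / (n : ℝ) := by ring
end

section
/- If the reward satisfies 0 ≤ r(x) ≤ 1 for all x ∈ X, then for any λ > 0 and n ≥ 1, D_KL(P*_λ ‖ P_{n,λ}) ≤ (1/n)·sinh(1/(2λ))². -/
open Finset Real

lemma sum_pi_prod_s4 {X : Type*} [Fintype X] :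
    ∀ (m : ℕ) (F : Fin m → X → ℝ),
    ∑ t : Fin m → X, ∏ j, F j (t j) = ∏ j, ∑ x, F j x := by
  intro m
  induction m with
  | zero => intro F; simp
  | succ k ih =>
    intro F
    rw [Fin.prod_univ_succ, ← ih fun j => F j.succ]
    rw [← Fintype.sum_equiv (Fin.consEquiv fun _ => X)
      (fun p : X × (Fin k → X) => F 0 p.1 * ∏ j, F j.succ (p.2 j))
      (fun t => ∏ j, F j (t j)) ?_]
    · rw [Fintype.sum_prod_type]
      simp_rw [← Finset.mul_sum, ← Finset.sum_mul]
    · rintro ⟨y, t⟩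
      simp only [Fin.consEquiv_apply]
      rw [Fin.prod_univ_succ]
      simp

lemma sum_pi_prod_marginal {X : Type*} [Fintype X] (m : ℕ) (P g : X → ℝ)
    (hP : ∑ x, P x = 1) (k : Fin m) :
    ∑ t : Fin m → X, (∏ j, P (t j)) * g (t k) = ∑ x, P x * g x := by
  have h1 : ∀ t : Fin m → X, (∏ j, P (t j)) * g (t k)
      = ∏ j, (P (t j) * (if j = k then g (t j) else 1)) := by
    intro t
    rw [Finset.prod_mul_distrib, Finset.prod_ite_eq' univ k (fun j => g (t j))]
    simp
  rw [Finset.sum_congr rfl fun t _ => h1 t]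
  rw [sum_pi_prod_s4 m (fun j x => P x * (if j = k then g x else 1))]
  have h2 : ∀ j : Fin m, (∑ x, P x * (if j = k then g x else 1))
      = if j = k then (∑ x, P x * g x) else 1 := by
    intro j
    split <;> simp [hP]
  rw [Finset.prod_congr rfl fun j _ => h2 j, Finset.prod_ite_eq' univ k]
  simp

lemma softBoN_ge_s4 {X : Type*} [Fintype X] [DecidableEq X] (P r : X → ℝ) (lam : ℝ)
    (hPpos : ∀ x, 0 < P x) (hPsum : ∑ x, P x = 1) (m : ℕ) (x : X) :
    ((m : ℝ) + 1) * (P x * Real.exp (r x / lam)) /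
      (Real.exp (r x / lam) + m * ∑ y, P y * Real.exp (r y / lam))
      ≤ softBoN P r lam (m + 1) x := by
  set w : X → ℝ := fun y => Real.exp (r y / lam) with hw
  have hwpos : ∀ y, 0 < w y := fun y => Real.exp_pos _
  set Z : ℝ := ∑ y, P y * w y with hZ
  have hZpos : 0 < Z := Finset.sum_pos (fun y _ => mul_pos (hPpos y) (hwpos y)) ⟨x, mem_univ x⟩
  set c : ℝ := w x + m * Z with hc
  have hcpos : 0 < c := by positivity
  have stepA : softBoN P r lam (m + 1) x
      = ∑ i : Fin (m+1), ∑ s : Fin (m+1) → X,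
          (∏ j, P (s j)) * ((if s i = x then w x else 0) / ∑ j, w (s j)) := by
    unfold softBoN
    have h : ∀ s : Fin (m+1) → X,
        (∏ j, P (s j)) * ((∑ i, if s i = x then Real.exp (r (s i) / lam) else 0) /
          ∑ j, Real.exp (r (s j) / lam))
        = ∑ i, (∏ j, P (s j)) * ((if s i = x then w x else 0) / ∑ j, w (s j)) := by
      intro s
      rw [Finset.sum_div, Finset.mul_sum]
      refine Finset.sum_congr rfl fun i _ => ?_
      by_cases h : s i = x <;> simp [h, hw]
    rw [Finset.sum_congr rfl fun s _ => h s, Finset.sum_comm]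
  have stepB : ∀ i : Fin (m+1),
      (∑ s : Fin (m+1) → X, (∏ j, P (s j)) * ((if s i = x then w x else 0) / ∑ j, w (s j)))
      = ∑ s : Fin (m+1) → X, (∏ j, P (s j)) * ((if s 0 = x then w x else 0) / ∑ j, w (s j)) := by
    intro i
    refine Fintype.sum_bijective (fun s => s ∘ (Equiv.swap (0 : Fin (m+1)) i)) ?_ _ _ ?_
    · have hinv : Function.Involutive
          (fun s : Fin (m+1) → X => s ∘ (Equiv.swap (0 : Fin (m+1)) i)) := by
        intro s; funext j; simp [Equiv.swap_apply_self]
      exact hinv.bijective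
    · intro s
      simp only [Function.comp_apply]
      rw [Equiv.prod_comp (Equiv.swap (0 : Fin (m+1)) i) (fun j => P (s j)),
        Equiv.sum_comp (Equiv.swap (0 : Fin (m+1)) i) (fun j => w (s j))]
      simp only [Equiv.swap_apply_left]
  have stepC : (∑ s : Fin (m+1) → X,
        (∏ j, P (s j)) * ((if s 0 = x then w x else 0) / ∑ j, w (s j)))
      = ∑ t : Fin m → X, (∏ j, P (t j)) * (P x * w x / (w x + ∑ j, w (t j))) := by
    rw [← Fintype.sum_equiv (Fin.consEquiv fun _ => X)
      (fun p : X × (Fin m → X) => (P p.1 * ∏ j, P (p.2 j)) *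
        ((if p.1 = x then w x else 0) / (w p.1 + ∑ j, w (p.2 j))))
      (fun s => (∏ j, P (s j)) * ((if s 0 = x then w x else 0) / ∑ j, w (s j))) ?_]
    · rw [Fintype.sum_prod_type]
      have h : ∀ y : X, (∑ t : Fin m → X, (P y * ∏ j, P (t j)) *
          ((if y = x then w x else 0) / (w y + ∑ j, w (t j))))
          = if y = x then ∑ t : Fin m → X,
              (∏ j, P (t j)) * (P x * w x / (w x + ∑ j, w (t j))) else 0 := by
        intro y
        by_cases h : y = x
        · subst h
          simp only [if_pos rfl]
          refine Finset.sum_congr rfl fun t _ => ?_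
          rw [if_true]
          ring
        · simp [h]
      rw [Finset.sum_congr rfl fun y _ => h y, Finset.sum_ite_eq' univ x]
      simp
    · rintro ⟨y, t⟩
      simp only [Fin.consEquiv_apply]
      rw [Fin.prod_univ_succ, Fin.sum_univ_succ]
      simp
  have hS1 : ∑ t : Fin m → X, ∏ j, P (t j) = 1 := by
    rw [sum_pi_prod_s4 m (fun _ y => P y)]
    simp [hPsum]
  have hS2 : ∑ t : Fin m → X, (∏ j, P (t j)) * (∑ j, w (t j)) = m * Z := by
    simp_rw [Finset.mul_sum]
    rw [Finset.sum_comm]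
    rw [Finset.sum_congr rfl fun k _ => sum_pi_prod_marginal m P w hPsum k]
    simp [hZ]
  have hS3 : ∑ t : Fin m → X, (∏ j, P (t j)) * (w x + ∑ j, w (t j)) = c := by
    simp_rw [mul_add]
    rw [Finset.sum_add_distrib, ← Finset.sum_mul, hS1, hS2]
    rw [hc]; ring
  have hwx : 0 < w x := hwpos x
  have hPx : 0 < P x := hPpos x
  have stepD : P x * w x / c ≤
      ∑ t : Fin m → X, (∏ j, P (t j)) * (P x * w x / (w x + ∑ j, w (t j))) := by
    have key : ∀ t : Fin m → X,
        (P x * w x * (2/c)) * (∏ j, P (t j))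
          - (P x * w x / c^2) * ((∏ j, P (t j)) * (w x + ∑ j, w (t j)))
        ≤ (∏ j, P (t j)) * (P x * w x / (w x + ∑ j, w (t j))) := by
      intro t
      have hμ : 0 ≤ ∏ j, P (t j) := Finset.prod_nonneg fun j _ => (hPpos _).le
      have hT : 0 ≤ ∑ j, w (t j) := Finset.sum_nonneg fun j _ => (hwpos _).le
      set u : ℝ := w x + ∑ j, w (t j) with hu
      have hupos : 0 < u := by positivity
      have key2 : 2/c - u/c^2 ≤ 1/u := by
        rw [div_sub_div _ _ (ne_of_gt hcpos) (by positivity : (c:ℝ)^2 ≠ 0),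
          div_le_div_iff₀ (by positivity) hupos]
        nlinarith [sq_nonneg (u - c)]
      calc (P x * w x * (2/c)) * (∏ j, P (t j)) - (P x * w x / c^2) * ((∏ j, P (t j)) * u)
          = (∏ j, P (t j)) * ((P x * w x) * (2/c - u/c^2)) := by ring
        _ ≤ (∏ j, P (t j)) * ((P x * w x) * (1/u)) := by
            apply mul_le_mul_of_nonneg_left _ hμ
            apply mul_le_mul_of_nonneg_left key2 (by positivity)
        _ = (∏ j, P (t j)) * (P x * w x / u) := by ring
    calc P x * w x / c
        = (P x * w x * (2/c)) * (∑ t : Fin m → X, ∏ j, P (t j))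
          - (P x * w x / c^2) * (∑ t : Fin m → X, (∏ j, P (t j)) * (w x + ∑ j, w (t j))) := by
          rw [hS1, hS3]
          field_simp
          ring
      _ = ∑ t : Fin m → X, ((P x * w x * (2/c)) * (∏ j, P (t j))
          - (P x * w x / c^2) * ((∏ j, P (t j)) * (w x + ∑ j, w (t j)))) := by
          rw [Finset.sum_sub_distrib, Finset.mul_sum, Finset.mul_sum]
      _ ≤ _ := Finset.sum_le_sum fun t _ => key t
  rw [stepA, Finset.sum_congr rfl fun i _ => stepB i, stepC, Finset.sum_const, card_univ,
    Fintype.card_fin, nsmul_eq_mul]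
  push_cast
  calc ((m : ℝ) + 1) * (P x * w x) / c = ((m : ℝ) + 1) * (P x * w x / c) := by ring
    _ ≤ _ := by
      apply mul_le_mul_of_nonneg_left stepD (by positivity)

/-- if `0 ≤ r ≤ 1`, then `D_KL(P*_λ ‖ P_{n,λ}) ≤ (1/n)·sinh(1/(2λ))²`. -/
theorem klDiv_tilt_softBoN_le_sinh {X : Type*} [Fintype X] [DecidableEq X]
    (P r : X → ℝ) (lam : ℝ) (hlam : 0 < lam)
    (hr : ∀ x, r x ∈ Set.Icc (0 : ℝ) 1)
    (hPpos : ∀ x, 0 < P x) (hPsum : ∑ x, P x = 1)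
    (n : ℕ) (hn : 1 ≤ n) :
    klDiv (tilt P r lam) (softBoN P r lam n) ≤
      (1 / (n : ℝ)) * Real.sinh (1 / (2 * lam)) ^ 2 := by
  obtain ⟨m, rfl⟩ : ∃ m, n = m + 1 := ⟨n - 1, (Nat.succ_pred_eq_of_pos hn).symm⟩
  set w : X → ℝ := fun y => Real.exp (r y / lam) with hw
  have hwpos : ∀ y, 0 < w y := fun y => Real.exp_pos _
  have hw1 : ∀ y, 1 ≤ w y := fun y => Real.one_le_exp (div_nonneg (hr y).1 hlam.le)
  set b : ℝ := Real.exp (1 / lam) with hb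
  have hb1 : 1 ≤ b := Real.one_le_exp (by positivity)
  have hbpos : 0 < b := lt_of_lt_of_le one_pos hb1
  have hwb : ∀ y, w y ≤ b :=
    fun y => Real.exp_le_exp.mpr ((div_le_div_iff_of_pos_right hlam).mpr (hr y).2)
  set Z : ℝ := ∑ y, P y * w y with hZ
  have hZ1 : 1 ≤ Z := by
    calc (1:ℝ) = ∑ y, P y := hPsum.symm
      _ ≤ Z := Finset.sum_le_sum fun y _ => le_mul_of_one_le_right (hPpos y).le (hw1 y)
  have hZb : Z ≤ b := by
    calc Z ≤ ∑ y, P y * b :=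
          Finset.sum_le_sum fun y _ => mul_le_mul_of_nonneg_left (hwb y) (hPpos y).le
      _ = b := by rw [← Finset.sum_mul, hPsum, one_mul]
  have hZpos : 0 < Z := lt_of_lt_of_le one_pos hZ1
  have hM : (0:ℝ) < (m:ℝ) + 1 := by positivity
  have htilt : ∀ x, tilt P r lam x = P x * w x / Z := fun x => rfl
  have hden : ∀ x, 0 < w x + (m:ℝ) * Z :=
    fun x => add_pos_of_pos_of_nonneg (hwpos x) (mul_nonneg (Nat.cast_nonneg m) hZpos.le)
  have hQpos : ∀ x, 0 < tilt P r lam x := by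
    intro x; rw [htilt]; exact div_pos (mul_pos (hPpos x) (hwpos x)) hZpos
  -- per-point log bound
  have hlog : ∀ x, Real.log (tilt P r lam x / softBoN P r lam (m+1) x)
      ≤ (w x - Z) / (((m:ℝ)+1) * Z) := by
    intro x
    have hLB : ((m:ℝ)+1) * (P x * w x) / (w x + m * Z) ≤ softBoN P r lam (m+1) x :=
      softBoN_ge_s4 P r lam hPpos hPsum m x
    have hLBpos : 0 < ((m:ℝ)+1) * (P x * w x) / (w x + m * Z) :=
      div_pos (mul_pos hM (mul_pos (hPpos x) (hwpos x))) (hden x)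
    have h1 : tilt P r lam x / softBoN P r lam (m+1) x ≤ (w x + m*Z)/(((m:ℝ)+1)*Z) := by
      calc tilt P r lam x / softBoN P r lam (m+1) x
          ≤ tilt P r lam x / (((m:ℝ)+1) * (P x * w x) / (w x + m*Z)) :=
            div_le_div_of_nonneg_left (hQpos x).le hLBpos hLB
        _ = (w x + m*Z)/(((m:ℝ)+1)*Z) := by
            rw [htilt]
            field_simp [(hPpos x).ne', (hwpos x).ne', hZpos.ne', (hden x).ne', hM.ne']
    have hratio_pos : 0 < (w x + (m:ℝ)*Z)/(((m:ℝ)+1)*Z) :=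
      div_pos (hden x) (mul_pos hM hZpos)
    have hQS_pos : 0 < tilt P r lam x / softBoN P r lam (m+1) x :=
      div_pos (hQpos x) (lt_of_lt_of_le hLBpos hLB)
    calc Real.log (tilt P r lam x / softBoN P r lam (m+1) x)
        ≤ Real.log ((w x + m*Z)/(((m:ℝ)+1)*Z)) := Real.log_le_log hQS_pos h1
      _ ≤ (w x + m*Z)/(((m:ℝ)+1)*Z) - 1 := Real.log_le_sub_one_of_pos hratio_pos
      _ = (w x - Z)/(((m:ℝ)+1)*Z) := by
          field_simp [hZpos.ne', hM.ne']
          ring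
  have hsum : klDiv (tilt P r lam) (softBoN P r lam (m+1))
      ≤ ∑ x, tilt P r lam x * ((w x - Z) / (((m:ℝ)+1) * Z)) := by
    unfold klDiv
    exact Finset.sum_le_sum fun x _ => mul_le_mul_of_nonneg_left (hlog x) (hQpos x).le
  have hsum2 : ∑ x, tilt P r lam x * ((w x - Z) / (((m:ℝ)+1) * Z))
      = ((∑ x, P x * w x ^ 2) - Z^2) / (((m:ℝ)+1) * Z^2) := by
    have h : ∀ x, tilt P r lam x * ((w x - Z) / (((m:ℝ)+1) * Z))
        = (P x * w x^2 - (P x * w x) * Z) / (((m:ℝ)+1) * Z^2) := by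
      intro x
      rw [htilt]
      field_simp [hZpos.ne', hM.ne']
    rw [Finset.sum_congr rfl fun x _ => h x, ← Finset.sum_div, Finset.sum_sub_distrib,
      ← Finset.sum_mul, ← hZ]
    rw [sq Z]
  have hvar : (∑ x, P x * w x ^ 2) - Z^2 ≤ (b - Z) * (Z - 1) := by
    have h0 : 0 ≤ ∑ x, P x * ((w x - 1) * (b - w x)) :=
      Finset.sum_nonneg fun x _ => mul_nonneg (hPpos x).le
        (mul_nonneg (by linarith [hw1 x]) (by linarith [hwb x]))
    have hexp : ∑ x, P x * ((w x - 1) * (b - w x))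
        = (1 + b) * Z - (∑ x, P x * w x ^ 2) - b := by
      have h : ∀ x, P x * ((w x - 1) * (b - w x))
          = (1+b) * (P x * w x) - P x * w x^2 - b * P x := fun x => by ring
      rw [Finset.sum_congr rfl fun x _ => h x]
      rw [Finset.sum_sub_distrib, Finset.sum_sub_distrib, ← Finset.mul_sum, ← Finset.mul_sum,
        ← hZ, hPsum]
      ring
    nlinarith
  have hkey : (b - Z) * (Z - 1) / Z^2 ≤ (b-1)^2/(4*b) := by
    rw [div_le_div_iff₀ (pow_pos hZpos 2) (by positivity)]
    nlinarith [sq_nonneg ((b+1)*Z - 2*b)]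
  have hsinh : (b-1)^2/(4*b) = Real.sinh (1/(2*lam))^2 := by
    rw [Real.sinh_eq]
    have hepos := Real.exp_pos (1/(2*lam))
    have he : Real.exp (1/(2*lam)) * Real.exp (1/(2*lam)) = b := by
      rw [← Real.exp_add, hb]
      congr 1
      rw [← add_div]
      rw [show (1:ℝ) + 1 = 2 by norm_num]
      rw [div_eq_div_iff (by positivity) (ne_of_gt hlam)]
      ring
    rw [Real.exp_neg, ← he]
    have h2 : Real.exp (1/(2*lam)) ≠ 0 := hepos.ne'
    field_simp
    ring
  have hfinal : ((∑ x, P x * w x ^ 2) - Z^2) / (((m:ℝ)+1) * Z^2)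
      ≤ (1/((m:ℝ)+1)) * Real.sinh (1/(2*lam))^2 := by
    calc ((∑ x, P x * w x ^ 2) - Z^2) / (((m:ℝ)+1) * Z^2)
        ≤ ((b - Z) * (Z - 1)) / (((m:ℝ)+1) * Z^2) :=
          (div_le_div_iff_of_pos_right (mul_pos hM (pow_pos hZpos 2))).mpr hvar
      _ = (1/((m:ℝ)+1)) * ((b - Z) * (Z - 1) / Z^2) := by
          field_simp
      _ ≤ (1/((m:ℝ)+1)) * ((b-1)^2/(4*b)) := by
          apply mul_le_mul_of_nonneg_left hkey (by positivity)
      _ = (1/((m:ℝ)+1)) * Real.sinh (1/(2*lam))^2 := by rw [hsinh]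
  have hcast : ((m+1 : ℕ) : ℝ) = (m:ℝ)+1 := by push_cast; ring
  rw [hcast]
  calc klDiv (tilt P r lam) (softBoN P r lam (m+1))
      ≤ ∑ x, tilt P r lam x * ((w x - Z) / (((m:ℝ)+1) * Z)) := hsum
    _ = ((∑ x, P x * w x ^ 2) - Z^2) / (((m:ℝ)+1) * Z^2) := hsum2
    _ ≤ (1/((m:ℝ)+1)) * Real.sinh (1/(2*lam))^2 := hfinal
end

section
/- Relative reward bound: assume 0 ≤ r(x) ≤ 1 for all x, λ > 0, and let M(λ) = e^{1/λ}/E_P[e^{r(X)/λ}] − 1. Then (E_{P*_λ}[r(X)/λ] − E_{P_{n,λ}}[r(X)/λ]) / E_{P*_λ}[r(X)/λ] ≤ M(λ)/(M(λ) + n), provided E_{P*_λ}[r(X)/λ] > 0. In particular, the expected reward of Soft Best-of-n converges to that of the tilted distribution with relative error O(1/n). -/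
open Finset Real

lemma prode_single {n : ℕ} (i : Fin n) (f : Fin n → ℝ) (hf : ∀ j, j ≠ i → f j = 1) :
    ∏ j, f j = f i := by
  rw [← Finset.mul_prod_erase Finset.univ f (Finset.mem_univ i),
    Finset.prod_eq_one (fun j hj => hf j (Finset.ne_of_mem_erase hj)), mul_one]

lemma exp_one {X : Type*} [Fintype X] (P : X → ℝ) (hPsum : ∑ x, P x = 1) {n : ℕ}
    (i : Fin n) (h : X → ℝ) :
    ∑ s : Fin n → X, (∏ j, P (s j)) * h (s i) = ∑ x, P x * h x := by
  have key := Fintype.prod_sum (fun (j : Fin n) (x : X) => P x * (if j = i then h x else 1))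
  calc ∑ s : Fin n → X, (∏ j, P (s j)) * h (s i)
      = ∑ s : Fin n → X, ∏ j, (P (s j) * (if j = i then h (s j) else 1)) := by
        refine Finset.sum_congr rfl fun s _ => ?_
        rw [Finset.prod_mul_distrib,
          prode_single i (fun j => if j = i then h (s j) else 1) (fun j hj => if_neg hj),
          if_pos rfl]
    _ = ∏ j, ∑ x, P x * (if j = i then h x else 1) := key.symm
    _ = ∑ x, P x * h x := by
        have hfi : ∀ j : Fin n, j ≠ i → (∑ x, P x * (if j = i then h x else 1)) = 1 := by
          intro j hj; simp [hj, hPsum]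
        rw [prode_single i _ hfi]
        simp

lemma prode_pair {n : ℕ} {i k : Fin n} (hik : i ≠ k) (f : Fin n → ℝ)
    (hf : ∀ j, j ≠ i → j ≠ k → f j = 1) : ∏ j, f j = f i * f k := by
  rw [← Finset.mul_prod_erase Finset.univ f (Finset.mem_univ i),
    ← Finset.mul_prod_erase _ f (Finset.mem_erase.mpr ⟨hik.symm, Finset.mem_univ k⟩),
    Finset.prod_eq_one, mul_one]
  intro j hj
  exact hf j (Finset.ne_of_mem_erase (Finset.mem_of_mem_erase hj)) (Finset.ne_of_mem_erase hj)

lemma exp_two {X : Type*} [Fintype X] (P : X → ℝ) (hPsum : ∑ x, P x = 1) {n : ℕ}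
    {i k : Fin n} (hik : i ≠ k) (h₁ h₂ : X → ℝ) :
    ∑ s : Fin n → X, (∏ j, P (s j)) * (h₁ (s i) * h₂ (s k)) =
      (∑ x, P x * h₁ x) * (∑ x, P x * h₂ x) := by
  have key := Fintype.prod_sum
    (fun (j : Fin n) (x : X) => P x * (if j = i then h₁ x else if j = k then h₂ x else 1))
  calc ∑ s : Fin n → X, (∏ j, P (s j)) * (h₁ (s i) * h₂ (s k))
      = ∑ s : Fin n → X, ∏ j, (P (s j) *
          (if j = i then h₁ (s j) else if j = k then h₂ (s j) else 1)) := by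
        refine Finset.sum_congr rfl fun s _ => ?_
        have hp := prode_pair hik
          (fun j => if j = i then h₁ (s j) else if j = k then h₂ (s j) else 1)
          (fun j hji hjk => by simp [hji, hjk])
        rw [Finset.prod_mul_distrib, hp]
        simp [Ne.symm hik]
    _ = ∏ j, ∑ x, P x * (if j = i then h₁ x else if j = k then h₂ x else 1) := key.symm
    _ = (∑ x, P x * h₁ x) * (∑ x, P x * h₂ x) := by
        have hp := prode_pair hik
          (fun j => ∑ x, P x * (if j = i then h₁ x else if j = k then h₂ x else 1))
          (fun j hji hjk => by simp [hji, hjk, hPsum])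
        rw [hp]
        simp [Ne.symm hik]

lemma sbon_lower_general {X : Type*} [Fintype X] (P g f : X → ℝ) (c : ℝ) (hc : 0 < c)
    (hP0 : ∀ x, 0 ≤ P x) (hPsum : ∑ x, P x = 1)
    (hg : ∀ x, 0 < g x) (hgc : ∀ x, g x ≤ c) (hf : ∀ x, 0 ≤ f x)
    (n : ℕ) (hn : 1 ≤ n) :
    (n : ℝ) * (∑ x, P x * (g x * f x)) / (c + ((n : ℝ) - 1) * ∑ x, P x * g x)
      ≤ ∑ s : Fin n → X, (∏ j, P (s j)) *
          ((∑ i : Fin n, g (s i) * f (s i)) / ∑ j, g (s j)) := by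
  haveI : Nonempty (Fin n) := Fin.pos_iff_nonempty.mp (by omega)
  set Z := ∑ x, P x * g x with hZdef
  set E := ∑ x, P x * (g x * f x) with hEdef
  set t0 := c + ((n : ℝ) - 1) * Z with ht0
  have hZ0 : 0 ≤ Z := Finset.sum_nonneg fun x _ => mul_nonneg (hP0 x) (hg x).le
  have ht0pos : 0 < t0 := by
    have : (0:ℝ) ≤ ((n:ℝ) - 1) * Z := by
      apply mul_nonneg _ hZ0
      have : (1:ℝ) ≤ (n:ℝ) := by exact_mod_cast hn
      linarith
    rw [ht0]; linarith
  have hD : ∀ s : Fin n → X, 0 < ∑ j, g (s j) :=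
    fun s => Finset.sum_pos (fun j _ => hg _) Finset.univ_nonempty
  -- expectation of gf(s i) * D(s)
  have hT : ∀ i : Fin n, ∑ s : Fin n → X, (∏ j, P (s j)) * (g (s i) * f (s i) * ∑ j, g (s j)) =
      (∑ x, P x * (g x * f x * g x)) + ((n : ℝ) - 1) * (E * Z) := by
    intro i
    have step : ∀ s : Fin n → X, (∏ j', P (s j')) * (g (s i) * f (s i) * ∑ j, g (s j)) =
        ∑ j, (∏ j', P (s j')) * (g (s i) * f (s i) * g (s j)) := fun s => by
      rw [Finset.mul_sum, Finset.mul_sum]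
    rw [Finset.sum_congr rfl fun s _ => step s, Finset.sum_comm]
    have hj : ∀ j : Fin n, (∑ s : Fin n → X, (∏ j', P (s j')) * (g (s i) * f (s i) * g (s j)))
        = if j = i then (∑ x, P x * (g x * f x * g x)) else E * Z := by
      intro j
      by_cases hji : j = i
      · subst hji
        rw [if_pos rfl]
        exact exp_one P hPsum j (fun x => g x * f x * g x)
      · rw [if_neg hji]
        exact exp_two P hPsum (Ne.symm hji) (fun x => g x * f x) g
    rw [Finset.sum_congr rfl fun j _ => hj j,
      ← Finset.add_sum_erase _ _ (Finset.mem_univ i), if_pos rfl,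
      Finset.sum_congr rfl fun j hjmem => if_neg (Finset.ne_of_mem_erase hjmem),
      Finset.sum_const, nsmul_eq_mul, Finset.card_erase_of_mem (Finset.mem_univ i),
      Finset.card_univ, Fintype.card_fin, Nat.cast_sub hn, Nat.cast_one]
  -- pointwise tangent-line bound
  have hpt : ∀ (s : Fin n → X) (i : Fin n),
      (∏ j, P (s j)) * (g (s i) * f (s i) * (2 * t0 - c - ((∑ j, g (s j)) - g (s i)))) / t0 ^ 2
        ≤ (∏ j, P (s j)) * (g (s i) * f (s i) / ∑ j, g (s j)) := by
    intro s i
    have hw : 0 ≤ ∏ j, P (s j) := Finset.prod_nonneg fun j _ => hP0 _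
    have hDpos := hD s
    have hgiD : g (s i) ≤ ∑ j, g (s j) :=
      Finset.single_le_sum (fun j _ => (hg _).le) (Finset.mem_univ i)
    have hDu : (∑ j, g (s j)) ≤ c + ((∑ j, g (s j)) - g (s i)) := by
      have := hgc (s i); linarith
    have hupos : 0 < c + ((∑ j, g (s j)) - g (s i)) := lt_of_lt_of_le hDpos hDu
    have key : (2 * t0 - (c + ((∑ j, g (s j)) - g (s i)))) / t0 ^ 2 ≤ 1 / ∑ j, g (s j) := by
      calc (2 * t0 - (c + ((∑ j, g (s j)) - g (s i)))) / t0 ^ 2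
          ≤ 1 / (c + ((∑ j, g (s j)) - g (s i))) := by
            rw [div_le_div_iff₀ (by positivity) hupos]
            nlinarith [sq_nonneg (t0 - (c + ((∑ j, g (s j)) - g (s i))))]
        _ ≤ 1 / ∑ j, g (s j) := one_div_le_one_div_of_le hDpos hDu
    have hgf : 0 ≤ g (s i) * f (s i) := mul_nonneg (hg _).le (hf _)
    calc (∏ j, P (s j)) * (g (s i) * f (s i) * (2 * t0 - c - ((∑ j, g (s j)) - g (s i)))) / t0 ^ 2
        = (∏ j, P (s j)) * ((g (s i) * f (s i)) *
            ((2 * t0 - (c + ((∑ j, g (s j)) - g (s i)))) / t0 ^ 2)) := by ring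
      _ ≤ (∏ j, P (s j)) * ((g (s i) * f (s i)) * (1 / ∑ j, g (s j))) := by
          apply mul_le_mul_of_nonneg_left _ hw
          exact mul_le_mul_of_nonneg_left key hgf
      _ = (∏ j, P (s j)) * (g (s i) * f (s i) / ∑ j, g (s j)) := by ring
  -- main chain
  calc (n : ℝ) * E / t0
      = ∑ _i : Fin n, (t0 * E) / t0 ^ 2 := by
        rw [Finset.sum_const, Finset.card_univ, Fintype.card_fin, nsmul_eq_mul]
        field_simp
    _ = ∑ i : Fin n, (∑ s : Fin n → X, (∏ j, P (s j)) *
          (g (s i) * f (s i) * (2 * t0 - c - ((∑ j, g (s j)) - g (s i))))) / t0 ^ 2 := by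
        refine Finset.sum_congr rfl fun i _ => ?_
        congr 1
        have expand : ∀ s : Fin n → X,
            (∏ j, P (s j)) * (g (s i) * f (s i) * (2 * t0 - c - ((∑ j, g (s j)) - g (s i)))) =
            (2 * t0 - c) * ((∏ j, P (s j)) * (g (s i) * f (s i)))
              - (∏ j, P (s j)) * (g (s i) * f (s i) * ∑ j, g (s j))
              + (∏ j, P (s j)) * (g (s i) * f (s i) * g (s i)) := fun s => by ring
        have e1 : ∑ s : Fin n → X, (∏ j, P (s j)) * (g (s i) * f (s i)) = E :=
          exp_one P hPsum i (fun x => g x * f x)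
        have e3 : ∑ s : Fin n → X, (∏ j, P (s j)) * (g (s i) * f (s i) * g (s i)) =
            ∑ x, P x * (g x * f x * g x) := exp_one P hPsum i (fun x => g x * f x * g x)
        rw [Finset.sum_congr rfl fun s _ => expand s, Finset.sum_add_distrib,
          Finset.sum_sub_distrib, ← Finset.mul_sum, e1, hT i, e3, ht0]
        ring
    _ = ∑ i : Fin n, ∑ s : Fin n → X, (∏ j, P (s j)) *
          (g (s i) * f (s i) * (2 * t0 - c - ((∑ j, g (s j)) - g (s i)))) / t0 ^ 2 := by
        refine Finset.sum_congr rfl fun i _ => ?_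
        rw [Finset.sum_div]
    _ ≤ ∑ i : Fin n, ∑ s : Fin n → X, (∏ j, P (s j)) * (g (s i) * f (s i) / ∑ j, g (s j)) := by
        refine Finset.sum_le_sum fun i _ => Finset.sum_le_sum fun s _ => hpt s i
    _ = ∑ s : Fin n → X, (∏ j, P (s j)) * ((∑ i : Fin n, g (s i) * f (s i)) / ∑ j, g (s j)) := by
        rw [Finset.sum_comm]
        refine Finset.sum_congr rfl fun s _ => ?_
        rw [← Finset.mul_sum, ← Finset.sum_div]

lemma sbon_expect {X : Type*} [Fintype X] [DecidableEq X]
    (P r : X → ℝ) (lam : ℝ) (n : ℕ) (f : X → ℝ) :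
    ∑ x, softBoN P r lam n x * f x =
      ∑ s : Fin n → X, (∏ j, P (s j)) *
        ((∑ i : Fin n, Real.exp (r (s i) / lam) * f (s i)) / ∑ j, Real.exp (r (s j) / lam)) := by
  unfold softBoN
  simp_rw [Finset.sum_mul]
  rw [Finset.sum_comm]
  refine Finset.sum_congr rfl fun s _ => ?_
  have h1 : ∀ x : X, (∏ j, P (s j)) *
      ((∑ i : Fin n, if s i = x then rexp (r (s i) / lam) else 0) / ∑ j, rexp (r (s j) / lam)) * f x
      = (∏ j, P (s j)) * (((∑ i : Fin n, if s i = x then rexp (r (s i) / lam) else 0) * f x) /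
          ∑ j, rexp (r (s j) / lam)) := fun x => by ring
  rw [Finset.sum_congr rfl fun x _ => h1 x, ← Finset.mul_sum, ← Finset.sum_div]
  congr 2
  simp_rw [Finset.sum_mul, ite_mul, zero_mul]
  rw [Finset.sum_comm]
  simp [Finset.sum_ite_eq]

lemma ratio_eq (cc Zv nn : ℝ) (h1 : cc/Zv - 1 + nn ≠ 0) (h2 : cc + (nn-1)*Zv ≠ 0)
    (hZ : Zv ≠ 0) : (cc/Zv - 1)/((cc/Zv - 1) + nn) = (cc - Zv)/(cc + (nn-1)*Zv) := by
  have h3 : cc/Zv - 1 = (cc - Zv)/Zv := by field_simp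
  have h4 : cc/Zv - 1 + nn = (cc + (nn-1)*Zv)/Zv := by field_simp; ring
  rw [h4, h3, div_div_div_cancel_right₀ hZ]

lemma calc_eq (Ev Zv cc nn : ℝ) (hZ : Zv ≠ 0) :
    (Ev/Zv)*(cc + (nn-1)*Zv) - (cc - Zv)*(Ev/Zv) = nn*Ev := by
  field_simp
  ring

theorem relative_reward_bound {X : Type*} [Fintype X] [DecidableEq X]
    (P r : X → ℝ) (lam : ℝ) (hlam : 0 < lam)
    (hr : ∀ x, r x ∈ Set.Icc (0 : ℝ) 1)
    (hPpos : ∀ x, 0 < P x) (hPsum : ∑ x, P x = 1)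
    (n : ℕ) (hn : 1 ≤ n)
    (hpos : 0 < expect (tilt P r lam) (fun x => r x / lam)) :
    (expect (tilt P r lam) (fun x => r x / lam) -
        expect (softBoN P r lam n) (fun x => r x / lam)) /
      expect (tilt P r lam) (fun x => r x / lam) ≤
    (Real.exp (1 / lam) / expect P (fun x => Real.exp (r x / lam)) - 1) /
      ((Real.exp (1 / lam) / expect P (fun x => Real.exp (r x / lam)) - 1) + n) := by
  rcases isEmpty_or_nonempty X with hX | hX
  · exfalso; simp [_root_.expect] at hpos
  simp only [_root_.expect, tilt] at hpos ⊢
  have hgc : ∀ x : X, Real.exp (r x / lam) ≤ Real.exp (1 / lam) := fun x =>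
    Real.exp_le_exp.mpr ((div_le_div_iff_of_pos_right hlam).mpr (hr x).2)
  have hc : (0:ℝ) < Real.exp (1 / lam) := Real.exp_pos _
  have hZpos : 0 < ∑ y, P y * Real.exp (r y / lam) :=
    Finset.sum_pos (fun x _ => mul_pos (hPpos x) (Real.exp_pos _)) Finset.univ_nonempty
  have hZc : (∑ y, P y * Real.exp (r y / lam)) ≤ Real.exp (1 / lam) := by
    calc (∑ y, P y * Real.exp (r y / lam)) ≤ ∑ y, P y * Real.exp (1 / lam) :=
          Finset.sum_le_sum fun x _ => mul_le_mul_of_nonneg_left (hgc x) (hPpos x).le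
      _ = Real.exp (1 / lam) := by rw [← Finset.sum_mul, hPsum, one_mul]
  have hn1 : (1:ℝ) ≤ (n:ℝ) := by exact_mod_cast hn
  have ht0pos : 0 < Real.exp (1 / lam) + ((n:ℝ) - 1) * ∑ y, P y * Real.exp (r y / lam) := by
    nlinarith
  have hstar : ∑ x, (P x * Real.exp (r x / lam) / ∑ y, P y * Real.exp (r y / lam)) * (r x / lam)
      = (∑ x, P x * (Real.exp (r x / lam) * (r x / lam))) / ∑ y, P y * Real.exp (r y / lam) := by
    rw [Finset.sum_div]
    exact Finset.sum_congr rfl fun x _ => by ring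
  have hA : ∑ x, softBoN P r lam n x * (r x / lam) =
      ∑ s : Fin n → X, (∏ j, P (s j)) *
        ((∑ i : Fin n, Real.exp (r (s i) / lam) * (r (s i) / lam)) /
          ∑ j, Real.exp (r (s j) / lam)) :=
    sbon_expect P r lam n fun x => r x / lam
  have hlow : (n:ℝ) * (∑ x, P x * (Real.exp (r x / lam) * (r x / lam))) /
        (Real.exp (1 / lam) + ((n:ℝ) - 1) * ∑ y, P y * Real.exp (r y / lam)) ≤
      ∑ s : Fin n → X, (∏ j, P (s j)) *
        ((∑ i : Fin n, Real.exp (r (s i) / lam) * (r (s i) / lam)) /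
          ∑ j, Real.exp (r (s j) / lam)) :=
    sbon_lower_general P (fun x => Real.exp (r x / lam)) (fun x => r x / lam)
      (Real.exp (1 / lam)) hc (fun x => (hPpos x).le) hPsum (fun x => Real.exp_pos _) hgc
      (fun x => div_nonneg (hr x).1 hlam.le) n hn
  rw [hstar] at hpos
  rw [hstar, hA]
  have hEpos : 0 < ∑ x, P x * (Real.exp (r x / lam) * (r x / lam)) := by
    have h := mul_pos hpos hZpos
    rwa [div_mul_cancel₀ _ hZpos.ne'] at h
  have hS : (n:ℝ) * (∑ x, P x * (Real.exp (r x / lam) * (r x / lam))) ≤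
      (∑ s : Fin n → X, (∏ j, P (s j)) *
        ((∑ i : Fin n, Real.exp (r (s i) / lam) * (r (s i) / lam)) /
          ∑ j, Real.exp (r (s j) / lam))) *
      (Real.exp (1 / lam) + ((n:ℝ) - 1) * ∑ y, P y * Real.exp (r y / lam)) := by
    have h2 := mul_le_mul_of_nonneg_right hlow ht0pos.le
    rwa [div_mul_cancel₀ _ ht0pos.ne'] at h2
  have hden : 0 < (Real.exp (1 / lam) / (∑ y, P y * Real.exp (r y / lam)) - 1) + (n:ℝ) := by
    have h1 : 1 ≤ Real.exp (1 / lam) / ∑ y, P y * Real.exp (r y / lam) :=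
      (one_le_div hZpos).mpr hZc
    linarith
  have hrhs : (Real.exp (1 / lam) / (∑ y, P y * Real.exp (r y / lam)) - 1) /
        ((Real.exp (1 / lam) / (∑ y, P y * Real.exp (r y / lam)) - 1) + (n:ℝ)) =
      (Real.exp (1 / lam) - ∑ y, P y * Real.exp (r y / lam)) /
        (Real.exp (1 / lam) + ((n:ℝ) - 1) * ∑ y, P y * Real.exp (r y / lam)) := by
    exact ratio_eq _ _ _ hden.ne' ht0pos.ne' hZpos.ne'
  rw [hrhs, div_le_div_iff₀ hpos ht0pos]
  have hcalc : ((∑ x, P x * (Real.exp (r x / lam) * (r x / lam))) /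
        (∑ y, P y * Real.exp (r y / lam))) *
        (Real.exp (1 / lam) + ((n:ℝ) - 1) * ∑ y, P y * Real.exp (r y / lam)) -
      (Real.exp (1 / lam) - ∑ y, P y * Real.exp (r y / lam)) *
        ((∑ x, P x * (Real.exp (r x / lam) * (r x / lam))) /
          (∑ y, P y * Real.exp (r y / lam))) =
      (n:ℝ) * (∑ x, P x * (Real.exp (r x / lam) * (r x / lam))) :=
    calc_eq _ _ _ _ hZpos.ne'
  nlinarith [hS, hcalc]
end
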